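/- arXiv:2403.12437 — 2 statements merged into one kernel-verified Lean document; each statement's English description precedes it below -/
import Mathlib

section
/- A finite digital image (X, κ) is reducible if and only if id_X is homotopic to a nonsurjective (κ, κ)-continuous map f : X → X. -/
/-- A point of the digital ambient space `ℤ^n`. -/
abbrev ZPoint (n : ℕ) : Type := Fin n → ℤ

/-- `f : X → Y` is `(κ, lam)`-continuous: adjacent points map to equal or adjacent points. -/
def DigCont {α β : Type*} (κ : α → α → Prop) (lam : β → β → Prop)
    (X : Set α) (Y : Set β) (f : X → Y) : Prop :=
  ∀ x x' : X, κ x.1 x'.1 → f x = f x' ∨ lam (f x).1 (f x').1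

/-- A digital homotopy of length `m` from `f` to `g` (time parametrized by `0, 1, …, m`). -/
def HtpyN {α β : Type*} (κ : α → α → Prop) (lam : β → β → Prop)
    (X : Set α) (Y : Set β) (m : ℕ) (f g : X → Y) : Prop :=
  ∃ F : X → ℕ → Y,
    (∀ x, F x 0 = f x) ∧ (∀ x, F x m = g x) ∧
    (∀ x, ∀ t, t < m → (F x t = F x (t + 1) ∨ lam (F x t).1 (F x (t + 1)).1)) ∧
    (∀ t, t ≤ m → DigCont κ lam X Y (fun x => F x t))

/-- `f` and `g` are digitally homotopic. -/
def Htpy {α β : Type*} (κ : α → α → Prop) (lam : β → β → Prop)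
    (X : Set α) (Y : Set β) (f g : X → Y) : Prop :=
  ∃ m : ℕ, HtpyN κ lam X Y m f g

/-- A digital image `(X, κ)` is reducible if it is homotopy equivalent to a digital
image `(Y, lam)` with strictly fewer points. -/
def Reducible {α : Type*} (κ : α → α → Prop) (X : Set α) : Prop :=
  ∃ (k : ℕ) (Y : Set (ZPoint k)) (lam : ZPoint k → ZPoint k → Prop),
    Symmetric lam ∧ Irreflexive lam ∧
    Y.Finite ∧ Y.ncard < X.ncard ∧
    ∃ (f : X → Y) (g : Y → X),
      DigCont κ lam X Y f ∧ DigCont lam κ Y X g ∧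
      Htpy κ κ X X (g ∘ f) id ∧ Htpy lam lam Y Y (f ∘ g) id

/-- A digital image `(X, κ)` is rigid if the only continuous self-map of `X`
homotopic to the identity is the identity. -/
def Rigid {α : Type*} (κ : α → α → Prop) (X : Set α) : Prop :=
  ∀ f : X → X, DigCont κ κ X X f → Htpy κ κ X X id f → f = id

/-- A `κ`-path of length `m` in `X` from `a` to `b`. -/
def IsPathIn {α : Type*} (κ : α → α → Prop) (X : Set α) (m : ℕ) (p : ℕ → α)
    (a b : α) : Prop :=
  (∀ i ≤ m, p i ∈ X) ∧ p 0 = a ∧ p m = b ∧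
    ∀ i < m, p i = p (i + 1) ∨ κ (p i) (p (i + 1))

/-- `(X, κ)` is connected: any two points of `X` are joined by a `κ`-path in `X`. -/
def DigConnected {α : Type*} (κ : α → α → Prop) (X : Set α) : Prop :=
  ∀ a ∈ X, ∀ b ∈ X, ∃ (m : ℕ) (p : ℕ → α), IsPathIn κ X m p a b

/-- `A` is a freezing set for `(X, κ)`. -/
def FreezingSet {α : Type*} (κ : α → α → Prop) (X A : Set α) : Prop :=
  ∀ f : X → X, DigCont κ κ X X f → (∀ x : X, x.1 ∈ A → f x = x) → f = id

/-- `A` is a cold set for `(X, κ)`. -/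
def ColdSet {α : Type*} (κ : α → α → Prop) (X A : Set α) : Prop :=
  ∀ f : X → X, DigCont κ κ X X f → (∀ x : X, x.1 ∈ A → f x = x) →
    ∀ x : X, f x = x ∨ κ (f x).1 x.1

/-- The generalized normal product adjacency `NP_v(κ_1, …, κ_v)`:
distinct points are adjacent iff each coordinate pair is equal or adjacent. -/
def NPadj {v : ℕ} {α : Fin v → Type*} (κ : ∀ i, α i → α i → Prop)
    (x x' : ∀ i, α i) : Prop :=
  x ≠ x' ∧ ∀ i, x i = x' i ∨ κ i (x i) (x' i)

/-- `S` is a digital `κ`-simple closed curve of `m` distinct points. -/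
def IsSimpleClosedCurve {α : Type*} (κ : α → α → Prop) (S : Set α) (m : ℕ) : Prop :=
  ∃ s : ZMod m → α, Function.Injective s ∧ S = Set.range s ∧
    ∀ i j : ZMod m, (κ (s i) (s j) ↔ (j = i + 1 ∨ j = i - 1))

/-- `f` is a 1-map in `C(X, κ)`: a continuous self-map moving each point by at most one step. -/
def OneMap {α : Type*} (κ : α → α → Prop) (X : Set α) (f : X → X) : Prop :=
  DigCont κ κ X X f ∧ ∀ x : X, f x = x ∨ κ (f x).1 x.1
section Aux

variable {α β γ : Type*} {κ : α → α → Prop} {lam : β → β → Prop} {μ : γ → γ → Prop}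
variable {X : Set α} {Y : Set β} {Z : Set γ}

theorem digCont_id : DigCont κ κ X X id := fun _ _ h => Or.inr h

theorem digCont_comp {f : X → Y} {g : Y → Z} (hf : DigCont κ lam X Y f)
    (hg : DigCont lam μ Y Z g) : DigCont κ μ X Z (g ∘ f) := by
  intro x x' h
  rcases hf x x' h with h1 | h1
  · exact Or.inl (by simp [Function.comp, h1])
  · exact hg _ _ h1

theorem htpy_refl {f : X → Y} (hf : DigCont κ lam X Y f) : Htpy κ lam X Y f f := by
  refine ⟨0, fun x _ => f x, fun x => rfl, fun x => rfl, fun x t ht => absurd ht (by omega),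
    fun t _ => hf⟩

theorem htpy_symm (hl : Symmetric lam) {f g : X → Y} (h : Htpy κ lam X Y f g) :
    Htpy κ lam X Y g f := by
  obtain ⟨m, F, h0, hm, hstep, hcont⟩ := h
  refine ⟨m, fun x t => F x (m - t), by simp [hm], by simp [h0], ?_, ?_⟩
  · intro x t ht
    dsimp only
    have hs := hstep x (m - t - 1) (by omega)
    have e1 : m - t - 1 + 1 = m - t := by omega
    have e2 : m - (t + 1) = m - t - 1 := by omega
    rw [e1] at hs
    rw [e2]
    rcases hs with h1 | h1
    · exact Or.inl h1.symm
    · exact Or.inr (hl h1)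
  · intro t ht
    exact hcont (m - t) (by omega)

theorem htpy_trans {f g h : X → Y} (h1 : Htpy κ lam X Y f g) (h2 : Htpy κ lam X Y g h) :
    Htpy κ lam X Y f h := by
  obtain ⟨m1, F1, h10, h1m, h1step, h1cont⟩ := h1
  obtain ⟨m2, F2, h20, h2m, h2step, h2cont⟩ := h2
  refine ⟨m1 + m2, fun x t => if t ≤ m1 then F1 x t else F2 x (t - m1), ?_, ?_, ?_, ?_⟩
  · intro x; simp [h10]
  · intro x
    dsimp only
    by_cases hm2 : m2 = 0
    · subst hm2
      rw [Nat.add_zero, if_pos le_rfl, h1m, ← h20, h2m]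
    · rw [if_neg (by omega), show m1 + m2 - m1 = m2 by omega, h2m]
  · intro x t ht
    dsimp only
    by_cases hc1 : t + 1 ≤ m1
    · rw [if_pos (by omega), if_pos hc1]
      exact h1step x t (by omega)
    · by_cases hc2 : t ≤ m1
      · have htm : t = m1 := by omega
        rw [if_pos hc2, if_neg hc1, htm, h1m, ← h20, show m1 + 1 - m1 = 1 by omega]
        exact h2step x 0 (by omega)
      · rw [if_neg hc2, if_neg hc1, show t + 1 - m1 = (t - m1) + 1 by omega]
        exact h2step x (t - m1) (by omega)
  · intro t ht
    by_cases hc : t ≤ m1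
    · simpa [hc] using h1cont t hc
    · simpa [hc] using h2cont (t - m1) (by omega)

theorem htpy_comp_left {f g : X → Y} {h : Y → Z} (hh : DigCont lam μ Y Z h)
    (hfg : Htpy κ lam X Y f g) : Htpy κ μ X Z (h ∘ f) (h ∘ g) := by
  obtain ⟨m, F, h0, hm, hstep, hcont⟩ := hfg
  refine ⟨m, fun x t => h (F x t), by simp [h0], by simp [hm], ?_, ?_⟩
  · intro x t ht
    rcases hstep x t ht with h1 | h1
    · exact Or.inl (congrArg h h1)
    · exact hh _ _ h1
  · intro t ht
    exact digCont_comp (hcont t ht) hh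

theorem digCont_iterate {f : X → X} (hf : DigCont κ κ X X f) (r : ℕ) :
    DigCont κ κ X X f^[r] := by
  induction r with
  | zero => exact digCont_id
  | succ r ih =>
      rw [Function.iterate_succ']
      exact digCont_comp ih hf

theorem htpy_id_iterate {f : X → X} (hf : DigCont κ κ X X f)
    (h : Htpy κ κ X X id f) (r : ℕ) : Htpy κ κ X X id f^[r] := by
  induction r with
  | zero => exact htpy_refl digCont_id
  | succ r ih =>
      rw [Function.iterate_succ']
      exact htpy_trans h (htpy_comp_left hf ih)

theorem exists_idem_iterate {T : Type*} [Finite T] (f : T → T) :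
    ∃ r, 1 ≤ r ∧ f^[r] ∘ f^[r] = f^[r] := by
  obtain ⟨i, j, hne, hij⟩ := Finite.exists_ne_map_eq_of_infinite (fun r : ℕ => f^[r])
  have hij' : f^[i] = f^[j] := hij
  wlog hlt : i < j generalizing i j
  · exact this j i hne.symm hij.symm hij'.symm (by omega)
  set d := j - i with hd
  have hd1 : 1 ≤ d := by omega
  have hkey : ∀ m, i ≤ m → f^[m + d] = f^[m] := by
    intro m hm
    have h1 : m + d = (m - i) + j := by omega
    have h2 : m = (m - i) + i := by omega
    rw [h1, Function.iterate_add, ← hij', ← Function.iterate_add, ← h2]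
  have hmul : ∀ k m, i ≤ m → f^[m + k * d] = f^[m] := by
    intro k
    induction k with
    | zero => simp
    | succ k ih =>
        intro m hm
        have h1 : m + (k + 1) * d = (m + d) + k * d := by ring
        rw [h1, ih (m + d) (by omega), hkey m hm]
  have hrge : i ≤ (i + 1) * d := by nlinarith
  refine ⟨(i + 1) * d, by nlinarith, ?_⟩
  rw [← Function.iterate_add]
  exact hmul (i + 1) ((i + 1) * d) hrge

end Aux
/-- A finite digital image is reducible iff its identity map is
homotopic to a nonsurjective continuous self-map. -/
theorem reducible_iff_id_homotopic_nonsurjective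
    {n : ℕ} (κ : ZPoint n → ZPoint n → Prop)
    (hsym : Symmetric κ) (hirr : Irreflexive κ)
    (X : Set (ZPoint n)) (hfin : X.Finite) :
    Reducible κ X ↔
      ∃ f : X → X, DigCont κ κ X X f ∧ ¬ Function.Surjective f ∧
        Htpy κ κ X X id f := by
  have _ : Finite ↥X := hfin.to_subtype
  constructor
  · rintro ⟨k, Y, lam, hls, hli, hYfin, hcard, f, g, hf, hg, hgf, hfg⟩
    have _ : Finite ↥Y := hYfin.to_subtype
    refine ⟨g ∘ f, digCont_comp hf hg, ?_, htpy_symm hsym hgf⟩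
    intro hsurj
    have hgs : Function.Surjective g := hsurj.of_comp
    have hle : Nat.card ↥X ≤ Nat.card ↥Y := Nat.card_le_card_of_surjective g hgs
    rw [Nat.card_coe_set_eq, Nat.card_coe_set_eq] at hle
    omega
  · rintro ⟨f, hf, hns, hh⟩
    obtain ⟨r, hr1, hidem⟩ := exists_idem_iterate f
    set e : X → X := f^[r] with he
    have hecont : DigCont κ κ X X e := digCont_iterate hf r
    have heh : Htpy κ κ X X id e := htpy_id_iterate hf hh r
    set Y : Set (ZPoint n) := Subtype.val '' (Set.range e) with hY
    have hYsub : Y ⊆ X := by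
      rintro _ ⟨y, _, rfl⟩
      exact y.2
    rw [Function.Surjective] at hns
    push_neg at hns
    obtain ⟨b, hb⟩ := hns
    have hbY : b.1 ∉ Y := by
      rintro ⟨y, ⟨a, rfl⟩, hv⟩
      have : e a = b := Subtype.ext hv
      have hre : e a = f (f^[r-1] a) := by
        rw [he]
        conv_lhs => rw [show r = (r - 1) + 1 by omega]
        rw [Function.iterate_succ']
        rfl
      exact hb (f^[r-1] a) (by rw [← hre, this])
    have hss : Y ⊂ X := ⟨hYsub, fun hXY => hbY (hXY b.2)⟩
    refine ⟨n, Y, κ, hsym, hirr, hfin.subset hYsub, Set.ncard_lt_ncard hss hfin, ?_⟩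
    have hmem : ∀ x : X, (e x).1 ∈ Y := fun x => ⟨e x, ⟨x, rfl⟩, rfl⟩
    set p : X → Y := fun x => ⟨(e x).1, hmem x⟩ with hp
    set i : Y → X := fun y => ⟨y.1, hYsub y.2⟩ with hi
    have hpc : DigCont κ κ X Y p := by
      intro x x' hxx
      rcases hecont x x' hxx with h1 | h1
      · exact Or.inl (Subtype.ext (by simp [hp, h1]))
      · exact Or.inr h1
    have hic : DigCont κ κ Y X i := fun y y' hyy => Or.inr hyy
    have hip : i ∘ p = e := by
      funext x
      exact Subtype.ext rfl
    have hpi : p ∘ i = id := by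
      funext y
      apply Subtype.ext
      obtain ⟨v, hv⟩ := y
      obtain ⟨w, ⟨a, rfl⟩, hva⟩ := hv
      subst hva
      show (e (i ⟨(e a).1, hmem a⟩)).1 = (e a).1
      have hie : i ⟨(e a).1, hmem a⟩ = e a := Subtype.ext rfl
      rw [hie, ← Function.comp_apply (f := e) (g := e), hidem]
    refine ⟨p, i, hpc, hic, ?_, ?_⟩
    · rw [hip]
      exact htpy_symm hsym heh
    · rw [hpi]
      exact htpy_refl digCont_id
end

section
/- A finite digital image (X, κ) is reducible if and only if id_X is homotopic in one step (i.e., via a homotopy F : X × [0, 1]_ℤ → X) to a nonsurjective (κ, κ)-continuous map f : X → X. -/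
private lemma digCont_comp_s12 {α β γ : Type*} {κ : α → α → Prop} {lam : β → β → Prop}
    {mu : γ → γ → Prop} {X : Set α} {Y : Set β} {Z : Set γ} {f : X → Y} {g : Y → Z}
    (hf : DigCont κ lam X Y f) (hg : DigCont lam mu Y Z g) :
    DigCont κ mu X Z (fun x => g (f x)) := by
  intro x x' h
  rcases hf x x' h with h' | h'
  · left; show g (f x) = g (f x'); rw [h']
  · exact hg _ _ h'

private lemma digCont_iterate_s12 {α : Type*} {κ : α → α → Prop} {X : Set α} {f : X → X}
    (hf : DigCont κ κ X X f) : ∀ k : ℕ, DigCont κ κ X X (f^[k])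
  | 0 => by intro x x' h; right; simpa using h
  | (k+1) => by
      have e : (f^[k+1] : ↥X → ↥X) = fun x => f (f^[k] x) :=
        funext fun x => Function.iterate_succ_apply' f k x
      rw [e]; exact digCont_comp_s12 (digCont_iterate_s12 hf k) hf

private lemma exists_iterate_eq_id {Z : Type*} [Finite Z] {s : Z → Z}
    (hinj : Function.Injective s) : ∃ N, 0 < N ∧ s^[N] = id := by
  obtain ⟨i, j, hne, heq⟩ := Finite.exists_ne_map_eq_of_infinite (fun k : ℕ => s^[k])
  rcases hne.lt_or_gt with hij | hij
  · refine ⟨j - i, by omega, funext fun x => ?_⟩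
    have h1 : s^[i] (s^[j - i] x) = s^[i] x := by
      rw [← Function.iterate_add_apply]
      have : i + (j - i) = j := by omega
      rw [this, heq]
    exact (hinj.iterate i) h1
  · refine ⟨i - j, by omega, funext fun x => ?_⟩
    have h1 : s^[j] (s^[i - j] x) = s^[j] x := by
      rw [← Function.iterate_add_apply]
      have : j + (i - j) = i := by omega
      rw [this, heq]
    exact (hinj.iterate j) h1

/-- A finite digital image is reducible iff its identity map is
homotopic in one step to a nonsurjective continuous self-map. -/
theorem reducible_iff_id_one_step_homotopic_nonsurjective
    {n : ℕ} (κ : ZPoint n → ZPoint n → Prop)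
    (hsym : Symmetric κ) (hirr : Irreflexive κ)
    (X : Set (ZPoint n)) (hfin : X.Finite) :
    Reducible κ X ↔
      ∃ f : X → X, DigCont κ κ X X f ∧ ¬ Function.Surjective f ∧
        HtpyN κ κ X X 1 id f := by
  classical
  have hXfin : Finite (↥X) := hfin.to_subtype
  constructor
  · -- forward
    rintro ⟨k, Y, lam, _, _, hYfin, hcard, f, g, hfc, hgc, ⟨m, F, hF0, hFm, hstep, hstage⟩, _⟩
    have hYfin' : Finite (↥Y) := hYfin.to_subtype
    have hns : ¬ Function.Surjective (g ∘ f) := by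
      intro hsurj
      have hgs : Function.Surjective g := hsurj.of_comp
      have := Nat.card_le_card_of_surjective g hgs
      rw [Nat.card_coe_set_eq, Nat.card_coe_set_eq] at this
      omega
    set P : ℕ → Prop := fun t => ¬ Function.Surjective (fun x => F x t) with hP
    have hP0 : P 0 := by
      intro h
      apply hns
      intro z
      obtain ⟨x, hx⟩ := h z
      exact ⟨x, by rw [← hF0 x]; exact hx⟩
    set t := Nat.findGreatest P m with ht
    have htm : t ≤ m := Nat.findGreatest_le m
    have hPt : P t := Nat.findGreatest_spec (Nat.zero_le m) hP0
    have htlt : t < m := by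
      rcases lt_or_eq_of_le htm with h | h
      · exact h
      · exfalso
        apply hPt
        rw [h]
        intro z
        exact ⟨z, by simpa using hFm z⟩
    have hs_surj : Function.Surjective (fun x => F x (t + 1)) := by
      by_contra hcon
      exact Nat.findGreatest_is_greatest (Nat.lt_succ_self t) (by omega) hcon
    set u : X → X := fun x => F x t with hu
    set s : X → X := fun x => F x (t + 1) with hs
    have hu_cont : DigCont κ κ X X u := hstage t (le_of_lt htlt)
    have hs_cont : DigCont κ κ X X s := hstage (t + 1) htlt
    have hrel : ∀ x, u x = s x ∨ κ (u x).1 (s x).1 := fun x => hstep x t htlt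
    have hs_inj : Function.Injective s := Finite.injective_iff_surjective.mpr hs_surj
    obtain ⟨N, hNpos, hNid⟩ := exists_iterate_eq_id hs_inj
    set h : X → X := fun x => u (s^[N - 1] x) with hh
    have hkey : ∀ x, s (s^[N - 1] x) = x := by
      intro x
      have h2 : s^[(N - 1) + 1] x = x := by
        have h3 : (N - 1) + 1 = N := by omega
        rw [h3, hNid]; rfl
      rwa [Function.iterate_succ_apply'] at h2
    have hh_cont : DigCont κ κ X X h :=
      digCont_comp_s12 (digCont_iterate_s12 hs_cont (N - 1)) hu_cont
    refine ⟨h, hh_cont, ?_, ?_⟩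
    · intro hcon
      apply hPt
      intro z
      obtain ⟨x, hx⟩ := hcon z
      exact ⟨s^[N - 1] x, hx⟩
    · refine ⟨fun x tt => match tt with | 0 => x | _ + 1 => h x,
        fun x => rfl, fun x => rfl, ?_, ?_⟩
      · intro x tt htt
        have htt0 : tt = 0 := by omega
        subst htt0
        show x = h x ∨ κ x.1 (h x).1
        rcases hrel (s^[N - 1] x) with h1 | h1
        · left
          exact (hkey x).symm.trans h1.symm
        · right
          rw [hkey x] at h1
          exact hsym h1
      · intro tt htt
        match tt with
        | 0 => exact fun x x' hk => Or.inr hk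
        | _ + 1 => exact fun x x' hk => hh_cont x x' hk
  · -- backward
    rintro ⟨f, hfc, hns, F, hF0, hF1, hstep, hstage⟩
    have hrel : ∀ x : X, x = f x ∨ κ (x : ZPoint n) (f x).1 := by
      intro x
      have := hstep x 0 Nat.one_pos
      rw [hF0 x, hF1 x] at this
      exact this
    set Y : Set (ZPoint n) := Set.range (fun x : X => (f x).1) with hY
    have hYsub : Y ⊆ X := by rintro v ⟨x, rfl⟩; exact (f x).2
    obtain ⟨x₀, hx₀'⟩ := not_forall.mp hns
    have hx₀ : ∀ x : X, f x ≠ x₀ := fun x h => hx₀' ⟨x, h⟩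
    have hYss : Y ⊂ X := by
      refine ⟨hYsub, fun hXY => ?_⟩
      have : (x₀ : ZPoint n) ∈ Y := hXY x₀.2
      obtain ⟨x, hx⟩ := this
      exact hx₀ x (Subtype.ext hx)
    refine ⟨n, Y, κ, hsym, hirr, hfin.subset hYsub, Set.ncard_lt_ncard hYss hfin, ?_⟩
    set f' : X → Y := fun x => ⟨(f x).1, ⟨x, rfl⟩⟩ with hf'
    set g' : Y → X := fun y => ⟨y.1, hYsub y.2⟩ with hg'
    have hf'c : DigCont κ κ X Y f' := by
      intro x x' hk
      rcases hfc x x' hk with h | h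
      · left
        apply Subtype.ext
        show (f x).1 = (f x').1
        exact congrArg Subtype.val h
      · right; exact h
    have hg'c : DigCont κ κ Y X g' := fun y y' hk => Or.inr hk
    refine ⟨f', g', hf'c, hg'c, ?_, ?_⟩
    · refine ⟨1, fun x tt => match tt with | 0 => g' (f' x) | _ + 1 => x,
        fun x => rfl, fun x => rfl, ?_, ?_⟩
      · intro x tt htt
        have htt0 : tt = 0 := by omega
        subst htt0
        show g' (f' x) = x ∨ κ (g' (f' x)).1 x.1
        rcases hrel x with h | h
        · left
          apply Subtype.ext
          exact (congrArg Subtype.val h).symm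
        · right; exact hsym h
      · intro tt htt
        match tt with
        | 0 => exact fun x x' hk => digCont_comp_s12 hf'c hg'c x x' hk
        | _ + 1 => exact fun x x' hk => Or.inr hk
    · refine ⟨1, fun y tt => match tt with | 0 => f' (g' y) | _ + 1 => y,
        fun y => rfl, fun y => rfl, ?_, ?_⟩
      · intro y tt htt
        have htt0 : tt = 0 := by omega
        subst htt0
        show f' (g' y) = y ∨ κ (f' (g' y)).1 y.1
        rcases hrel (g' y) with h | h
        · left
          apply Subtype.ext
          exact (congrArg Subtype.val h).symm
        · right; exact hsym h
      · intro tt htt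
        match tt with
        | 0 => exact fun y y' hk => digCont_comp_s12 hg'c hf'c y y' hk
        | _ + 1 => exact fun y y' hk => Or.inr hk
end
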